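/- The Stieltjes transform g(z) = ∫ (λ − z)^{−1} dσ_w(λ) of the semicircle distribution with parameter v satisfies the quadratic equation v² g(z)² + z g(z) + 1 = 0 for all z with Im z > 0. -/

import Mathlib

/-- The Wigner semicircle density with parameter `v`. -/
noncomputable def scDensity (v lam : ℝ) : ℝ :=
  if |lam| ≤ 2 * v then (1 / (2 * Real.pi * v ^ 2)) * Real.sqrt (4 * v ^ 2 - lam ^ 2)
  else 0

/-!
Let `V` be the principal square root of `r² - z²` (so `Re V > 0` when `Im z > 0`) and
`U(t) = (r² - z t + V √(r² - t²)) / (t - z)`. Because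
`(r² - z t)² - V² (r² - t²) = r² (t - z)²`, the logarithmic derivative of `U` is
`-V / (√(r² - t²) (t - z))`, so `√(r² - t²) - z arcsin (t / r) - V log (-i U(t))` is a primitive
of `√(r² - t²) / (t - z)` on `(-r, r)`. For `|t| < r` the point `U(t)` lies in the upper
half-plane, and `U(±r) = ±r`, so after the rotation by `-i` the logarithm stays on its
holomorphic branch up to the endpoints, where its values differ by `π i`. Hence
`∫_{-r}^{r} √(r² - t²) / (t - z) dt = π (-z + i V)`, and with `r = 2v` the Stieltjes transform
is `g = (-z + i V) / (2 v²)`, a root of `v² g² + z g + 1` because `V² = 4 v² - z²`.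
-/

open MeasureTheory Complex intervalIntegral
open scoped Real

theorem Complex.sqrt_sq (w : ℂ) : w.sqrt ^ 2 = w :=
  cpow_ofNat_inv_pow w 2

theorem Complex.re_sqrt_pos {w : ℂ} (hw : w ∈ slitPlane) : 0 < w.sqrt.re := by
  rw [Complex.sqrt, cpow_inv_two_re, Real.sqrt_pos]
  rcases mem_slitPlane_iff.1 hw with hre | him
  · linarith [norm_nonneg w]
  · linarith [neg_abs_le w.re, abs_re_lt_norm.2 him]

theorem Complex.ofReal_sq_sub_sq_mem_slitPlane (r : ℝ) {z : ℂ} (hz : z.im ≠ 0) :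
    (r : ℂ) ^ 2 - z ^ 2 ∈ slitPlane := by
  rw [mem_slitPlane_iff]
  by_cases hx : z.re = 0
  · left
    simp only [sq, sub_re, mul_re, ofReal_re, ofReal_im, hx]
    nlinarith [sq_pos_of_ne_zero hz]
  · right
    simp only [sq, sub_im, mul_im, ofReal_re, ofReal_im]
    intro h
    exact mul_ne_zero hx hz (by linarith)

theorem Complex.ofReal_sub_ne_zero (t : ℝ) {z : ℂ} (hz : z.im ≠ 0) : (t : ℂ) - z ≠ 0 := by
  intro h
  exact hz (by simpa using congrArg im h)

noncomputable def stieltjesLogArg (r : ℝ) (z : ℂ) (t : ℝ) : ℂ :=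
  ((r : ℂ) ^ 2 - z * t + ((r : ℂ) ^ 2 - z ^ 2).sqrt * (√(r ^ 2 - t ^ 2) : ℝ)) / ((t : ℂ) - z)

section

variable {r : ℝ} {z : ℂ}

theorem stieltjesLogArg_im_pos (hz : 0 < z.im) {t : ℝ} (ht : |t| < r) :
    0 < (stieltjesLogArg r z t).im := by
  set V := ((r : ℂ) ^ 2 - z ^ 2).sqrt with hVdef
  set s := √(r ^ 2 - t ^ 2) with hsdef
  have hp : 0 < V.re := re_sqrt_pos (ofReal_sq_sub_sq_mem_slitPlane r hz.ne')
  have hs : 0 < s := Real.sqrt_pos.2 (by nlinarith [abs_lt.1 ht])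
  have hs2 : s ^ 2 = r ^ 2 - t ^ 2 := Real.sq_sqrt (by nlinarith [abs_lt.1 ht])
  have hV : V ^ 2 = r ^ 2 - z ^ 2 := Complex.sqrt_sq _
  have hVre : V.re ^ 2 - V.im ^ 2 = r ^ 2 - z.re ^ 2 + z.im ^ 2 := by
    have := congrArg re hV
    simp only [sq, mul_re, sub_re, ofReal_re, ofReal_im] at this
    linear_combination this
  have hVim : V.re * V.im = -(z.re * z.im) := by
    have := congrArg im hV
    simp only [sq, mul_im, sub_im, ofReal_re, ofReal_im] at this
    linear_combination this / 2
  have hnonneg : 0 ≤ (t - z.re) * V.im + z.im * V.re := by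
    have hsq : 0 ≤ V.re ^ 2 + z.re ^ 2 - z.re * t := by
      nlinarith [abs_lt.1 ht, sq_nonneg (z.re - t), sq_nonneg V.im, sq_nonneg z.im]
    have hmul : ((t - z.re) * V.im + z.im * V.re) * V.re
        = z.im * (V.re ^ 2 + z.re ^ 2 - z.re * t) := by
      linear_combination (t - z.re) * hVim
    exact (mul_nonneg_iff_of_pos_right hp).1 (hmul ▸ mul_nonneg hz.le hsq)
  have him : (stieltjesLogArg r z t).im
      = (z.im * s ^ 2 + s * ((t - z.re) * V.im + z.im * V.re)) / normSq ((t : ℂ) - z) := by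
    rw [stieltjesLogArg, ← hVdef, ← hsdef, div_im, div_sub_div_same, ← ofReal_pow]
    congr 1
    simp only [add_im, add_re, sub_re, sub_im, mul_re, mul_im, ofReal_re, ofReal_im]
    linear_combination (-z.im) * hs2
  rw [him]
  have := normSq_pos.2 (ofReal_sub_ne_zero t hz.ne')
  positivity

theorem stieltjesLogArg_of_sq_eq (hz : z.im ≠ 0) {t : ℝ} (ht : t ^ 2 = r ^ 2) :
    stieltjesLogArg r z t = t := by
  have hD := ofReal_sub_ne_zero t hz
  have htC : (t : ℂ) ^ 2 = r ^ 2 := by exact_mod_cast ht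
  rw [stieltjesLogArg, ← ht, sub_self, Real.sqrt_zero, div_eq_iff hD]
  push_cast
  linear_combination -htC

theorem neg_I_mul_stieltjesLogArg_mem_slitPlane (hr : 0 < r) (hz : 0 < z.im) {t : ℝ}
    (ht : |t| ≤ r) : -I * stieltjesLogArg r z t ∈ slitPlane := by
  rcases ht.lt_or_eq with ht | ht
  · left
    simpa using stieltjesLogArg_im_pos hz ht
  · right
    rw [stieltjesLogArg_of_sq_eq hz.ne' (by rw [← sq_abs, ht])]
    have : t ≠ 0 := by rintro rfl; simp at ht; linarith
    simpa using this

theorem continuous_stieltjesLogArg (hz : z.im ≠ 0) : Continuous (stieltjesLogArg r z) := by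
  unfold stieltjesLogArg
  fun_prop (disch := exact fun t => ofReal_sub_ne_zero t hz)

theorem hasDerivAt_sqrt_sq_sub_sq {t : ℝ} (ht : |t| < r) :
    HasDerivAt (fun u => √(r ^ 2 - u ^ 2)) (-t / √(r ^ 2 - t ^ 2)) t := by
  have hpos : 0 < r ^ 2 - t ^ 2 := by nlinarith [abs_lt.1 ht]
  convert ((hasDerivAt_pow 2 t).const_sub (r ^ 2)).sqrt hpos.ne' using 1
  field_simp
  ring

theorem hasDerivAt_arcsin_div {t : ℝ} (ht : |t| < r) :
    HasDerivAt (fun u => Real.arcsin (u / r)) (√(r ^ 2 - t ^ 2))⁻¹ t := by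
  have hr : 0 < r := (abs_nonneg t).trans_lt ht
  have hlt : |t / r| < 1 := by rwa [abs_div, abs_of_pos hr, div_lt_one hr]
  have harc : HasDerivAt (fun u => Real.arcsin (u / r)) (1 / √(1 - (t / r) ^ 2) * (1 / r)) t :=
    (Real.hasDerivAt_arcsin (by linarith [neg_abs_le (t / r)])
      (by linarith [le_abs_self (t / r)])).comp t ((hasDerivAt_id' t).div_const r)
  refine harc.congr_deriv ?_
  rw [show 1 - (t / r) ^ 2 = (r ^ 2 - t ^ 2) / r ^ 2 by field_simp,
    Real.sqrt_div' _ (sq_nonneg r), Real.sqrt_sq hr.le]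
  field_simp

theorem hasDerivAt_stieltjesLogArg (hz : z.im ≠ 0) {t : ℝ} (ht : |t| < r) :
    HasDerivAt (stieltjesLogArg r z)
      (-((r : ℂ) ^ 2 - z ^ 2).sqrt * stieltjesLogArg r z t / (√(r ^ 2 - t ^ 2) * ((t : ℂ) - z)))
      t := by
  set V := ((r : ℂ) ^ 2 - z ^ 2).sqrt with hVdef
  set s := √(r ^ 2 - t ^ 2) with hsdef
  have hs : 0 < s := Real.sqrt_pos.2 (by nlinarith [abs_lt.1 ht])
  have hs2 : (s : ℂ) ^ 2 = r ^ 2 - t ^ 2 := by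
    exact_mod_cast Real.sq_sqrt (by nlinarith [abs_lt.1 ht] : 0 ≤ r ^ 2 - t ^ 2)
  have hV : V ^ 2 = r ^ 2 - z ^ 2 := Complex.sqrt_sq _
  have hD := ofReal_sub_ne_zero t hz
  have hnum := (((hasDerivAt_id' t).ofReal_comp.const_mul z).const_sub ((r : ℂ) ^ 2)).add
    ((hasDerivAt_sqrt_sq_sub_sq ht).ofReal_comp.const_mul V)
  have hquot := hnum.div ((hasDerivAt_id' t).ofReal_comp.sub_const z) hD
  refine hquot.congr_deriv ?_
  rw [stieltjesLogArg, ← hVdef, ← hsdef, Pi.add_apply, ← hsdef]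
  have hsC : (s : ℂ) ≠ 0 := ofReal_ne_zero.2 hs.ne'
  push_cast
  field_simp
  linear_combination (s : ℂ) * hV - V * hs2

noncomputable def stieltjesPrimitive (r : ℝ) (z : ℂ) (t : ℝ) : ℂ :=
  (√(r ^ 2 - t ^ 2) : ℝ) - z * (Real.arcsin (t / r) : ℝ)
    - ((r : ℂ) ^ 2 - z ^ 2).sqrt * log (-I * stieltjesLogArg r z t)

theorem hasDerivAt_stieltjesPrimitive (hz : 0 < z.im) {t : ℝ} (ht : |t| < r) :
    HasDerivAt (stieltjesPrimitive r z) (√(r ^ 2 - t ^ 2) * ((t : ℂ) - z)⁻¹) t := by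
  set V := ((r : ℂ) ^ 2 - z ^ 2).sqrt with hVdef
  set s := √(r ^ 2 - t ^ 2) with hsdef
  have hs : 0 < s := Real.sqrt_pos.2 (by nlinarith [abs_lt.1 ht])
  have hs2 : (s : ℂ) ^ 2 = r ^ 2 - t ^ 2 := by
    exact_mod_cast Real.sq_sqrt (by nlinarith [abs_lt.1 ht] : 0 ≤ r ^ 2 - t ^ 2)
  have hV : V ^ 2 = r ^ 2 - z ^ 2 := Complex.sqrt_sq _
  have hD := ofReal_sub_ne_zero t hz.ne'
  have hU : stieltjesLogArg r z t ≠ 0 := fun h => by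
    simpa [h] using stieltjesLogArg_im_pos hz ht
  have hlog := ((hasDerivAt_stieltjesLogArg hz.ne' ht).const_mul (-I)).clog_real
    (neg_I_mul_stieltjesLogArg_mem_slitPlane ((abs_nonneg t).trans_lt ht) hz ht.le)
  have hF := ((hasDerivAt_sqrt_sq_sub_sq ht).ofReal_comp.sub
    ((hasDerivAt_arcsin_div ht).ofReal_comp.const_mul z)).sub (hlog.const_mul V)
  refine hF.congr_deriv ?_
  rw [← hVdef, ← hsdef]
  have hsC : (s : ℂ) ≠ 0 := ofReal_ne_zero.2 hs.ne'
  push_cast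
  field_simp
  linear_combination hV - hs2

theorem continuousOn_stieltjesPrimitive (hr : 0 < r) (hz : 0 < z.im) :
    ContinuousOn (stieltjesPrimitive r z) (Set.Icc (-r) r) := by
  have hlog : ContinuousOn (fun t => log (-I * stieltjesLogArg r z t)) (Set.Icc (-r) r) :=
    ((continuous_const.mul (continuous_stieltjesLogArg hz.ne')).continuousOn).clog
      fun t ht => neg_I_mul_stieltjesLogArg_mem_slitPlane hr hz (abs_le.2 ht)
  unfold stieltjesPrimitive
  fun_prop

theorem stieltjesPrimitive_sub (hr : 0 < r) (hz : 0 < z.im) :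
    stieltjesPrimitive r z r - stieltjesPrimitive r z (-r)
      = π * (-z + I * ((r : ℂ) ^ 2 - z ^ 2).sqrt) := by
  simp only [stieltjesPrimitive, stieltjesLogArg_of_sq_eq hz.ne' (neg_sq r),
    stieltjesLogArg_of_sq_eq hz.ne' rfl, neg_div, div_self hr.ne', Real.arcsin_neg, Real.arcsin_one,
    sub_self, neg_sq, Real.sqrt_zero]
  rw [show -I * (r : ℂ) = r * (-I) by ring, show -I * ((-r : ℝ) : ℂ) = r * I by push_cast; ring,
    log_ofReal_mul hr (neg_ne_zero.2 I_ne_zero), log_ofReal_mul hr I_ne_zero, log_I, log_neg_I]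
  push_cast
  ring

theorem integral_sqrt_sq_sub_sq_mul_inv_sub (hr : 0 < r) (hz : 0 < z.im) :
    ∫ t in -r..r, (√(r ^ 2 - t ^ 2) : ℂ) * ((t : ℂ) - z)⁻¹
      = π * (-z + I * ((r : ℂ) ^ 2 - z ^ 2).sqrt) := by
  have hint : Continuous fun t : ℝ => (√(r ^ 2 - t ^ 2) : ℂ) * ((t : ℂ) - z)⁻¹ := by
    fun_prop (disch := exact fun t => ofReal_sub_ne_zero t hz.ne')
  rw [integral_eq_sub_of_hasDeriv_right_of_le (by linarith) (continuousOn_stieltjesPrimitive hr hz)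
    (fun t ht => (hasDerivAt_stieltjesPrimitive hz (abs_lt.2 ht)).hasDerivWithinAt)
    (hint.intervalIntegrable _ _), stieltjesPrimitive_sub hr hz]

theorem integral_scDensity_mul {v : ℝ} (hv : 0 ≤ v) (f : ℝ → ℂ) :
    ∫ t, (scDensity v t : ℂ) * f t
      = (1 / (2 * π * v ^ 2) : ℝ) * ∫ t in -(2 * v)..2 * v, (√((2 * v) ^ 2 - t ^ 2) : ℂ) * f t := by
  have hind : (fun t => (scDensity v t : ℂ) * f t) = (Set.Icc (-(2 * v)) (2 * v)).indicator
      fun t => ((1 / (2 * π * v ^ 2) : ℝ) : ℂ) * ((√((2 * v) ^ 2 - t ^ 2) : ℂ) * f t) := by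
    ext t
    simp only [scDensity, Set.indicator_apply, Set.mem_Icc, ← abs_le,
      show (2 * v) ^ 2 = 4 * v ^ 2 by ring]
    split_ifs
    · push_cast
      ring
    · simp
  rw [hind, MeasureTheory.integral_indicator measurableSet_Icc, integral_Icc_eq_integral_Ioc,
    ← integral_of_le (by linarith), intervalIntegral.integral_const_mul]

theorem integral_scDensity_mul_inv_sub {v : ℝ} (hv : 0 < v) (hz : 0 < z.im) :
    ∫ t, (scDensity v t : ℂ) * ((t : ℂ) - z)⁻¹ = (-z + I * (4 * v ^ 2 - z ^ 2).sqrt) / (2 * v ^ 2) := by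
  rw [integral_scDensity_mul hv.le, integral_sqrt_sq_sub_sq_mul_inv_sub (by linarith) hz]
  have : (π : ℂ) ≠ 0 := ofReal_ne_zero.2 Real.pi_ne_zero
  push_cast
  rw [show (2 * (v : ℂ)) ^ 2 = 4 * v ^ 2 by ring]
  generalize (4 * (v : ℂ) ^ 2 - z ^ 2).sqrt = V
  field_simp

end

/-- The Stieltjes transform of the semicircle distribution satisfies
`v² g² + z g + 1 = 0` in the upper half-plane. -/
theorem sc_stieltjes_quadratic (v : ℝ) (hv : 0 < v) (z : ℂ) (hz : 0 < z.im) :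
    (v : ℂ) ^ 2 * (∫ lam : ℝ, (scDensity v lam : ℂ) * ((lam : ℂ) - z)⁻¹) ^ 2
      + z * (∫ lam : ℝ, (scDensity v lam : ℂ) * ((lam : ℂ) - z)⁻¹) + 1 = 0 := by
  rw [integral_scDensity_mul_inv_sub hv hz]
  set V := (4 * (v : ℂ) ^ 2 - z ^ 2).sqrt
  have hV : V ^ 2 = 4 * v ^ 2 - z ^ 2 := Complex.sqrt_sq _
  have hv' : (v : ℂ) ≠ 0 := ofReal_ne_zero.2 hv.ne'
  field_simp
  linear_combination V ^ 2 * I_sq - hV
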